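/- Let r2 ≥ 3 be odd. There is no graph with parameters (r2, r3) for any r3 with C(r2−1, 2) < r3 < C(r2, 2). -/

import Mathlib

open SimpleGraph Finset

/-- The K3-degree of a vertex: the number of triangles (3-cliques) of `G` containing `v`. -/
noncomputable def K3deg {V : Type*} (G : SimpleGraph V) (v : V) : ℕ :=
  {t : Finset V | G.IsNClique 3 t ∧ v ∈ t}.ncard

/-- The degree of a vertex, as the cardinality of its open neighbourhood. -/
noncomputable def deg {V : Type*} (G : SimpleGraph V) (v : V) : ℕ :=
  (G.neighborSet v).ncard

/-- `G` has parameters `(r2, r3)`: every vertex has degree `r2` and K3-degree `r3`. -/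
def HasParams {V : Type*} (G : SimpleGraph V) (r2 r3 : ℕ) : Prop :=
  ∀ v : V, deg G v = r2 ∧ K3deg G v = r3

/-!
If every vertex has degree `r` and lies in `t` triangles, the neighbourhood of each vertex
contains `δ = 2 (C(r,2) - t)` ordered pairs of non-adjacent vertices, and the window on `t`
says `2 ≤ δ ≤ 2r - 4`. With so few non-adjacencies, counting them around two non-adjacent
vertices `x, y` with a common neighbour forces `N(x) = N(y)`. Hence for an edge `uv` the
neighbours of `v` not adjacent to `u` are exactly the twins of `u` other than `u`, so
`δ = r (p - 1)` where `p` is the size of a twin class. The window forces `p = 2`, and then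
`r (r - 2) = 2t` is even, which is impossible for odd `r`.
-/

namespace SimpleGraph

variable {V : Type*} [Fintype V] [DecidableEq V] (G : SimpleGraph V) [DecidableRel G.Adj]

def trianglesAt (v : V) : Finset (Finset V) := {t ∈ G.cliqueFinset 3 | v ∈ t}

def farNbrs (u v : V) : Finset V := G.neighborFinset v \ insert u (G.neighborFinset u)

/-- The number of ordered pairs of distinct non-adjacent neighbours of `v`. -/
def cliqueDefect (v : V) : ℕ := ∑ u ∈ G.neighborFinset v, #(G.farNbrs u v)

def twins (u : V) : Finset V := {w | G.neighborFinset w = G.neighborFinset u}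

variable {G} {r : ℕ} {u v w x y : V}

lemma mem_farNbrs : w ∈ G.farNbrs u v ↔ G.Adj v w ∧ w ≠ u ∧ ¬G.Adj u w := by
  simp [farNbrs, not_or]

lemma card_farNbrs_add_card_inter (h : G.Adj u v) :
    #(G.farNbrs u v) + #(G.neighborFinset u ∩ G.neighborFinset v) + 1 = G.degree v := by
  have hu : u ∉ G.neighborFinset v ∩ G.neighborFinset u := by simp
  have hsplit := card_sdiff_add_card_inter (G.neighborFinset v) (insert u (G.neighborFinset u))
  rw [inter_insert_of_mem (by simpa using h.symm), card_insert_of_notMem hu, inter_comm] at hsplit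
  rw [← card_neighborFinset_eq_degree, ← hsplit, farNbrs]
  ring

lemma card_farNbrs_comm (hreg : G.IsRegularOfDegree r) (h : G.Adj u v) :
    #(G.farNbrs u v) = #(G.farNbrs v u) := by
  have huv := card_farNbrs_add_card_inter h
  have hvu := card_farNbrs_add_card_inter h.symm
  rw [hreg.degree_eq] at huv hvu
  rw [inter_comm] at hvu
  omega

lemma card_filter_mem_trianglesAt (hu : G.Adj v u) :
    #{t ∈ G.trianglesAt v | u ∈ t} = #(G.neighborFinset u ∩ G.neighborFinset v) := by
  symm
  refine card_bij (fun w _ ↦ {u, v, w}) ?_ ?_ ?_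
  · intro w hw
    simp only [mem_inter, mem_neighborFinset] at hw
    simp [trianglesAt, is3Clique_triple_iff, hu.symm, hw.1, hw.2]
  · intro w₁ hw₁ w₂ hw₂ h
    simp only [mem_inter, mem_neighborFinset] at hw₁ hw₂
    have : w₁ ∈ ({u, v, w₂} : Finset V) := h ▸ by simp
    simp only [mem_insert, mem_singleton] at this
    rcases this with rfl | rfl | rfl
    · exact (G.irrefl hw₁.1).elim
    · exact (G.irrefl hw₁.2).elim
    · rfl
  · intro t ht
    simp only [trianglesAt, mem_filter, mem_cliqueFinset_iff] at ht
    obtain ⟨⟨htc, hvt⟩, hut⟩ := ht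
    have hvt' : v ∈ t.erase u := mem_erase.2 ⟨hu.ne, hvt⟩
    obtain ⟨w, hw⟩ : ∃ w, (t.erase u).erase v = {w} := by
      rw [← card_eq_one, card_erase_of_mem hvt', card_erase_of_mem hut, htc.card_eq]
    have hwt : w ∈ t ∧ w ≠ u ∧ w ≠ v := by
      have : w ∈ (t.erase u).erase v := hw ▸ mem_singleton_self w
      simp only [mem_erase] at this
      tauto
    have ht : t = {u, v, w} := by
      rw [← insert_erase hut, ← insert_erase hvt', hw]
    refine ⟨w, ?_, ht.symm⟩
    simp only [mem_inter, mem_neighborFinset]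
    exact ⟨htc.isClique hut hwt.1 hwt.2.1.symm, htc.isClique hvt hwt.1 hwt.2.2.symm⟩

lemma sum_card_inter_neighborFinset (v : V) :
    ∑ u ∈ G.neighborFinset v, #(G.neighborFinset u ∩ G.neighborFinset v)
      = 2 * #(G.trianglesAt v) := by
  have hbelow : ∀ u ∈ G.neighborFinset v,
      #(G.neighborFinset u ∩ G.neighborFinset v)
        = #(bipartiteBelow (fun t u ↦ u ∈ t) (G.trianglesAt v) u) := fun u hu ↦
    (card_filter_mem_trianglesAt ((mem_neighborFinset _ _ _).1 hu)).symm
  have habove : ∀ t ∈ G.trianglesAt v,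
      #(bipartiteAbove (fun t u ↦ u ∈ t) (G.neighborFinset v) t) = 2 := by
    intro t ht
    simp only [trianglesAt, mem_filter, mem_cliqueFinset_iff] at ht
    have : bipartiteAbove (fun t u ↦ u ∈ t) (G.neighborFinset v) t = t.erase v := by
      ext u
      simp only [bipartiteAbove, mem_filter, mem_neighborFinset, mem_erase]
      exact ⟨fun h ↦ ⟨h.1.ne', h.2⟩, fun h ↦ ⟨ht.1.isClique ht.2 h.2 h.1.symm, h.2⟩⟩
    rw [this, card_erase_of_mem ht.2, ht.1.card_eq]
  rw [sum_congr rfl hbelow, ← sum_card_bipartiteAbove_eq_sum_card_bipartiteBelow,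
    sum_congr rfl habove, sum_const, smul_eq_mul, mul_comm]

lemma cliqueDefect_add_two_mul_card_trianglesAt (v : V) :
    G.cliqueDefect v + 2 * #(G.trianglesAt v) + G.degree v = G.degree v * G.degree v := by
  have h : ∑ u ∈ G.neighborFinset v,
      (#(G.farNbrs u v) + #(G.neighborFinset u ∩ G.neighborFinset v) + 1)
        = ∑ _u ∈ G.neighborFinset v, G.degree v :=
    sum_congr rfl fun u hu ↦ card_farNbrs_add_card_inter ((mem_neighborFinset _ _ _).1 hu).symm
  rw [sum_add_distrib, sum_add_distrib, sum_const, card_neighborFinset_eq_degree,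
    sum_card_inter_neighborFinset] at h
  simpa [cliqueDefect] using h

lemma mem_farNbrs_comm (hu : G.Adj v u) (hw : G.Adj v w) :
    w ∈ G.farNbrs u v ↔ u ∈ G.farNbrs w v := by
  simp only [mem_farNbrs, hu, hw, true_and, ne_comm, G.adj_comm u w]

lemma two_mul_degree_le_cliqueDefect_add_two (hxy : ¬G.Adj x y) (hne : x ≠ y)
    (hv : G.neighborFinset x ∩ G.neighborFinset y = {v}) :
    2 * G.degree v ≤ G.cliqueDefect v + 2 := by
  have hvxy : v ∈ G.neighborFinset x ∩ G.neighborFinset y := hv ▸ mem_singleton_self v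
  simp only [mem_inter, mem_neighborFinset] at hvxy
  have hx : x ∈ G.neighborFinset v := by simpa using hvxy.1.symm
  have hy : y ∈ (G.neighborFinset v).erase x := by simpa [hne.symm] using hvxy.2.symm
  set D := ((G.neighborFinset v).erase x).erase y
  have hmemD : ∀ {u}, u ∈ D ↔ u ≠ y ∧ u ≠ x ∧ G.Adj v u := by simp [D]
  have hyx : y ∈ G.farNbrs x v := mem_farNbrs.2 ⟨hvxy.2.symm, hne.symm, hxy⟩
  have hxy' : x ∈ G.farNbrs y v := mem_farNbrs.2 ⟨hvxy.1.symm, hne, fun h ↦ hxy h.symm⟩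
  have hcover : ∀ u ∈ D, u ∈ G.farNbrs x v ∨ u ∈ G.farNbrs y v := by
    intro u hu
    obtain ⟨huy, hux, hvu⟩ := hmemD.1 hu
    by_contra! h
    simp only [mem_farNbrs, hvu, hux, huy, true_and, ne_eq, not_false_eq_true, not_not] at h
    have : u ∈ G.neighborFinset x ∩ G.neighborFinset y := by simp [h.1, h.2]
    rw [hv, mem_singleton] at this
    exact G.irrefl (this ▸ hvu)
  have hsum : G.cliqueDefect v
      = #(G.farNbrs x v) + #(G.farNbrs y v) + ∑ u ∈ D, #(G.farNbrs u v) := by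
    rw [cliqueDefect, ← add_sum_erase _ _ hx, ← add_sum_erase _ _ hy, add_assoc]
  have hD : #D + 2 = G.degree v := by
    rw [← card_neighborFinset_eq_degree, ← card_erase_add_one hx, ← card_erase_add_one hy]
  have hfar : #D + 2 ≤ #(G.farNbrs x v) + #(G.farNbrs y v) := by
    have hsub : D ⊆ (G.farNbrs x v).erase y ∪ (G.farNbrs y v).erase x := fun u hu ↦ by
      rcases hcover u hu with h | h
      · exact mem_union_left _ (mem_erase.2 ⟨(hmemD.1 hu).1, h⟩)
      · exact mem_union_right _ (mem_erase.2 ⟨(hmemD.1 hu).2.1, h⟩)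
    have := (card_le_card hsub).trans (card_union_le _ _)
    rw [← card_erase_add_one hyx, ← card_erase_add_one hxy']
    omega
  have hrest : #D ≤ ∑ u ∈ D, #(G.farNbrs u v) := by
    simpa using card_nsmul_le_sum D (fun u ↦ #(G.farNbrs u v)) 1 fun u hu ↦ by
      rcases hcover u hu with h | h
      · exact card_pos.2 ⟨x, (mem_farNbrs_comm hvxy.1.symm (hmemD.1 hu).2.2).1 h⟩
      · exact card_pos.2 ⟨y, (mem_farNbrs_comm hvxy.2.symm (hmemD.1 hu).2.2).1 h⟩
  omega

lemma card_add_card_mul_le_sum_farNbrs (hxy : ¬G.Adj x y) (hne : x ≠ y) :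
    #(G.neighborFinset x ∩ G.neighborFinset y)
        + #(G.neighborFinset x \ G.neighborFinset y) * #(G.neighborFinset x ∩ G.neighborFinset y)
      ≤ ∑ z ∈ G.neighborFinset x \ G.neighborFinset y, #(G.farNbrs z x)
        + ∑ v ∈ G.neighborFinset x ∩ G.neighborFinset y, #(G.farNbrs y v) := by
  set M := G.neighborFinset x ∩ G.neighborFinset y
  set B := G.neighborFinset x \ G.neighborFinset y
  have hM : ∀ v ∈ M, 1 + #(bipartiteAbove G.Adj B v) ≤ #(G.farNbrs y v) := by
    intro v hv
    simp only [M, mem_inter, mem_neighborFinset] at hv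
    have hsub : insert x (bipartiteAbove G.Adj B v) ⊆ G.farNbrs y v := by
      intro w hw
      simp only [B, mem_insert, bipartiteAbove, mem_filter, mem_sdiff, mem_neighborFinset] at hw
      rcases hw with rfl | ⟨⟨hxw, hyw⟩, hvw⟩
      · exact mem_farNbrs.2 ⟨hv.1.symm, hne, fun h ↦ hxy h.symm⟩
      · exact mem_farNbrs.2 ⟨hvw, by rintro rfl; exact hxy hxw, hyw⟩
    have hx : x ∉ bipartiteAbove G.Adj B v := by simp [B, bipartiteAbove]
    simpa [card_insert_of_notMem hx, add_comm] using card_le_card hsub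
  have hB : ∀ z ∈ B, #M ≤ #(bipartiteBelow G.Adj M z) + #(G.farNbrs z x) := by
    intro z hz
    simp only [B, mem_sdiff, mem_neighborFinset] at hz
    have hsub : {w ∈ M | ¬G.Adj w z} ⊆ G.farNbrs z x := by
      intro w hw
      simp only [M, mem_filter, mem_inter, mem_neighborFinset] at hw
      exact mem_farNbrs.2 ⟨hw.1.1, by rintro rfl; exact hz.2 hw.1.2, fun h ↦ hw.2 h.symm⟩
    have := card_filter_add_card_filter_not (s := M) (p := fun w ↦ G.Adj w z)
    have := card_le_card hsub
    simp only [bipartiteBelow]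
    omega
  have h1 := sum_le_sum hM
  have h2 := sum_le_sum hB
  have hdouble := sum_card_bipartiteAbove_eq_sum_card_bipartiteBelow (s := M) (t := B) G.Adj
  rw [sum_add_distrib, sum_const, smul_eq_mul, mul_one] at h1
  rw [sum_add_distrib, ← hdouble] at h2
  rw [sum_const, smul_eq_mul] at h2
  -- the edges between `M` and `B` are counted once on each side
  omega

theorem neighborFinset_eq_of_not_adj (hreg : G.IsRegularOfDegree r)
    (hdef : ∀ v, G.cliqueDefect v + 4 ≤ 2 * r) (hxy : ¬G.Adj x y)
    (hvx : G.Adj v x) (hvy : G.Adj v y) : G.neighborFinset x = G.neighborFinset y := by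
  obtain rfl | hne := eq_or_ne x y
  · rfl
  set M := G.neighborFinset x ∩ G.neighborFinset y
  have hvM : v ∈ M := by simp [M, hvx.symm, hvy.symm]
  have hM : 2 ≤ #M := by
    by_contra! hlt
    have hMv : M = {v} := eq_singleton_iff_unique_mem.2
      ⟨hvM, fun w hw ↦ card_le_one.1 (by omega) w hw v hvM⟩
    have := two_mul_degree_le_cliqueDefect_add_two hxy hne hMv
    have := hdef v
    rw [hreg.degree_eq] at *
    omega
  by_contra hNe
  have hB : 1 ≤ #(G.neighborFinset x \ G.neighborFinset y) := by
    refine card_pos.2 (nonempty_iff_ne_empty.2 fun hB ↦ hNe ?_)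
    refine eq_of_subset_of_card_le (sdiff_eq_empty_iff_subset.1 hB) ?_
    simp [card_neighborFinset_eq_degree, hreg.degree_eq]
  have hBx := card_sdiff_add_card_inter (G.neighborFinset x) (G.neighborFinset y)
  have hCy := card_sdiff_add_card_inter (G.neighborFinset y) (G.neighborFinset x)
  rw [card_neighborFinset_eq_degree, hreg.degree_eq] at hBx hCy
  rw [inter_comm] at hCy
  have hσ : ∀ {x y}, G.cliqueDefect x = ∑ z ∈ G.neighborFinset x \ G.neighborFinset y,
      #(G.farNbrs z x) + ∑ v ∈ G.neighborFinset x ∩ G.neighborFinset y, #(G.farNbrs x v) := by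
    intro x y
    rw [cliqueDefect, ← sum_inter_add_sum_sdiff _ (G.neighborFinset y), add_comm]
    congr 1
    refine sum_congr rfl fun v hv ↦ card_farNbrs_comm hreg ?_
    simpa [adj_comm] using (mem_inter.1 hv).1
  have hx := card_add_card_mul_le_sum_farNbrs hxy hne
  have hy := card_add_card_mul_le_sum_farNbrs (fun h ↦ hxy h.symm) hne.symm
  have hσx := @hσ x y
  have hσy := @hσ y x
  rw [inter_comm] at hy hσy
  have := hdef x
  have := hdef y
  obtain hCB : #(G.neighborFinset y \ G.neighborFinset x)
      = #(G.neighborFinset x \ G.neighborFinset y) := by omega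
  rw [hCB] at hy
  -- `2|M|(1 + |B|) ≤ cliqueDefect x + cliqueDefect y ≤ 4(|M| + |B|) - 8` fails for `|M| ≥ 2, |B| ≥ 1`
  nlinarith

lemma farNbrs_eq_erase_twins (hreg : G.IsRegularOfDegree r)
    (hdef : ∀ v, G.cliqueDefect v + 4 ≤ 2 * r) (h : G.Adj u v) :
    G.farNbrs u v = (G.twins u).erase u := by
  ext w
  simp only [mem_farNbrs, twins, mem_erase, mem_filter, mem_univ, true_and]
  constructor
  · rintro ⟨hvw, hwu, huw⟩
    exact ⟨hwu, neighborFinset_eq_of_not_adj hreg hdef (fun h ↦ huw h.symm) hvw h.symm⟩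
  · rintro ⟨hwu, hN⟩
    have hadj : ∀ {z}, G.Adj w z ↔ G.Adj u z := by
      simp only [← mem_neighborFinset, hN, implies_true]
    exact ⟨(hadj.2 h).symm, hwu, fun huw ↦ G.irrefl (hadj.2 huw)⟩

lemma cliqueDefect_eq_mul (hreg : G.IsRegularOfDegree r)
    (hdef : ∀ v, G.cliqueDefect v + 4 ≤ 2 * r) (v : V) :
    G.cliqueDefect v = r * (#(G.twins v) - 1) := by
  have hv : v ∈ G.twins v := by simp [twins]
  calc G.cliqueDefect v = ∑ u ∈ G.neighborFinset v, #(G.farNbrs v u) :=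
        sum_congr rfl fun u hu ↦ card_farNbrs_comm hreg ((mem_neighborFinset _ _ _).1 hu).symm
    _ = ∑ _u ∈ G.neighborFinset v, (#(G.twins v) - 1) :=
        sum_congr rfl fun u hu ↦ by
          rw [farNbrs_eq_erase_twins hreg hdef ((mem_neighborFinset _ _ _).1 hu),
            card_erase_of_mem hv]
    _ = r * (#(G.twins v) - 1) := by
        rw [sum_const, card_neighborFinset_eq_degree, hreg.degree_eq, smul_eq_mul]

end SimpleGraph

lemma deg_eq_degree {V : Type*} (G : SimpleGraph V) (v : V) [Fintype (G.neighborSet v)] :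
    deg G v = G.degree v := by
  rw [deg, Set.ncard_eq_toFinset_card', ← card_neighborFinset_eq_degree]
  rfl

lemma K3deg_eq_card_trianglesAt {V : Type*} [Fintype V] [DecidableEq V] (G : SimpleGraph V)
    [DecidableRel G.Adj] (v : V) : K3deg G v = #(G.trianglesAt v) := by
  rw [K3deg, ← Set.ncard_coe_finset]
  congr
  ext t
  simp [trianglesAt]

lemma bounds_of_choose_pred_lt_lt_choose {r t d : ℕ} (hlo : (r - 1).choose 2 < t)
    (hhi : t < r.choose 2) (h : d + 2 * t + r = r * r) : 2 ≤ d ∧ d + 4 ≤ 2 * r := by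
  obtain _ | n := r
  · simp at hhi
  have hpascal : (n + 1).choose 2 = n.choose 2 + n := by
    rw [Nat.choose_succ_succ', Nat.choose_one_right, add_comm]
  have htwice : 2 * n.choose 2 + n = n * n := by
    rw [Nat.choose_two_right, Nat.two_mul_div_two_of_even (Nat.even_mul_pred_self n),
      Nat.mul_sub_one, Nat.sub_add_cancel (Nat.le_mul_self n)]
  simp only [Nat.add_sub_cancel] at hlo
  constructor <;> nlinarith

theorem stmt14_general (r2 r3 : ℕ) (hodd : Odd r2)
    (hlo : Nat.choose (r2 - 1) 2 < r3) (hhi : r3 < Nat.choose r2 2) :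
    ¬ ∃ (V : Type) (_ : Fintype V) (_ : Nonempty V) (G : SimpleGraph V),
      HasParams G r2 r3 := by
  rintro ⟨V, _, ⟨v⟩, G, hG⟩
  classical
  have hreg : G.IsRegularOfDegree r2 := fun w ↦ (deg_eq_degree G w).symm.trans (hG w).1
  have hcount : ∀ w, G.cliqueDefect w + 2 * r3 + r2 = r2 * r2 := fun w ↦ by
    rw [← (hG w).2, K3deg_eq_card_trianglesAt, ← hreg.degree_eq w]
    exact G.cliqueDefect_add_two_mul_card_trianglesAt w
  have hbounds := fun w ↦ bounds_of_choose_pred_lt_lt_choose hlo hhi (hcount w)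
  have hmul := G.cliqueDefect_eq_mul hreg (fun w ↦ (hbounds w).2) v
  obtain ⟨hlow, hhigh⟩ := hbounds v
  have htwins : #(G.twins v) - 1 = 1 := by
    rw [hmul] at hlow hhigh
    rcases Nat.lt_trichotomy (#(G.twins v) - 1) 1 with h | h | h
    · simp [Nat.lt_one_iff.1 h] at hlow
    · exact h
    · nlinarith
  have h := hcount v
  rw [hmul, htwins, mul_one] at h
  exact Nat.not_even_iff_odd.2 (hodd.mul hodd) (h ▸ ⟨r2 + r3, by ring⟩)

theorem stmt14 (r2 r3 : ℕ) (hr2 : 3 ≤ r2) (hodd : Odd r2)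
    (hlo : Nat.choose (r2 - 1) 2 < r3) (hhi : r3 < Nat.choose r2 2) :
    ¬ ∃ (V : Type) (_ : Fintype V) (_ : Nonempty V) (G : SimpleGraph V),
      HasParams G r2 r3 :=
  stmt14_general r2 r3 hodd hlo hhi
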